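/- If families (a_m), (b_m) of complex numbers and γ ∈ ℤ satisfy −2n·b_{m+n} = −n·a + (−n−γ)·b_n for all m, n ∈ ℤ (where a ∈ ℂ is a fixed constant), then b_m = b_n for all m, n ∈ ℤ; moreover if γ ≠ 0 then a = 0 and b_m = 0 for all m, while if γ = 0 then b_m = a for all m. -/

import Mathlib

theorem half_derivation_coeff_b
    (a : ℂ) (b : ℤ → ℂ) (γ : ℤ)
    (h : ∀ m n : ℤ, -2 * (n : ℂ) * b (m + n)
        = -(n : ℂ) * a + ((-n - γ : ℤ) : ℂ) * b n) :
    (∀ m n : ℤ, b m = b n) ∧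
    (γ ≠ 0 → a = 0 ∧ ∀ m : ℤ, b m = 0) ∧
    (γ = 0 → ∀ m : ℤ, b m = a) := by
  have b_eq_b_zero : ∀ m : ℤ, b m = b 0 := by
    intro m
    have hm := h (m - 1) 1
    have h0 := h (-1) 1
    simp only [sub_add_cancel, neg_add_cancel] at hm h0
    linear_combination (-1 / 2 : ℂ) * (hm.trans h0.symm)
  have γ_mul_b_zero : (γ : ℂ) * b 0 = 0 := by
    have h00 := h 0 0
    push_cast at h00
    linear_combination h00
  have a_eq_b_zero : a = b 0 := by
    have h01 := h 0 1
    rw [b_eq_b_zero (0 + 1), b_eq_b_zero 1] at h01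
    push_cast at h01
    linear_combination h01 - γ_mul_b_zero
  refine ⟨fun m n => (b_eq_b_zero m).trans (b_eq_b_zero n).symm, fun hγ => ?_,
    fun _ m => (b_eq_b_zero m).trans a_eq_b_zero.symm⟩
  have b_zero : b 0 = 0 :=
    (mul_eq_zero.mp γ_mul_b_zero).resolve_left (Int.cast_ne_zero.mpr hγ)
  exact ⟨a_eq_b_zero.trans b_zero, fun m => (b_eq_b_zero m).trans b_zero⟩
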